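/- Let N ∈ ℕ and set ℓ := N/2. Then for all k, j ∈ {0,…,N}: (1) Σ_{i=0}^{N} C(N,i)· i · K_k(i) K_j(i) = 2^{N} C(N,k)^{−1} · c₁(k,j), where c₁(k,j) = −(k+1)/2 if j = k+1, c₁(k,j) = ℓ if j = k, c₁(k,j) = −(N−k+1)/2 if j = k−1, and c₁(k,j) = 0 otherwise; (2) Σ_{i=0}^{N} C(N,i)· i² · K_k(i) K_j(i) = 2^{N} C(N,k)^{−1} · c₂(k,j), where c₂(k,j) = (k+1)(k+2)/4 if j = k+2, c₂(k,j) = −ℓ(k+1) if j = k+1, c₂(k,j) = ℓ(ℓ+1/2) + k(ℓ−k/2) if j = k, c₂(k,j) = −ℓ(N−k+1) if j = k−1, c₂(k,j) = (N−k+1)(N−k+2)/4 if j = k−2, and c₂(k,j) = 0 otherwise. -/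

import Mathlib

/-!
Put `G_i(X) = (1 - X)^i (1 + X)^(N - i)` (`genPoly`); expanding `1 - X = (1 + X) - 2X` shows that
`C(N,k) K_k(i)` is the coefficient of `X^k` in `G_i`. Two facts about these polynomials give
everything:

* the generating function `Σ_i C(N,i) G_i(s) G_i(t) = (2 + 2st)^N`, so the polynomial
  `Σ_i C(N,i) C(N,j) K_j(i) G_i` equals `2^N C(N,j) X^j` (orthogonality);
* `G_i` is an eigenvector of `L f = N (1 - X) f - (1 - X²) f'` (`diffOp`) with eigenvalue `2i`.

Hence `Σ_i C(N,i) (2i)^r C(N,j) K_j(i) G_i = 2^N C(N,j) L^r(X^j)`, and reading off the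
coefficient of `X^k` for `r = 1, 2` gives both identities.
-/

open Polynomial

/-- Krawtchouk polynomial `K_n(x)` with parameter `p = 1/2` and `N` trials. -/
noncomputable def kraw (N n : ℕ) (x : ℝ) : ℝ :=
  ∑ s ∈ Finset.range (n + 1),
    ((ascPochhammer ℝ s).eval (-(n : ℝ)) * (ascPochhammer ℝ s).eval (-x)
        / ((ascPochhammer ℝ s).eval (-(N : ℝ)) * (Nat.factorial s : ℝ))) * 2 ^ s

open Finset

namespace Krawtchouk

variable {R : Type*} [CommRing R]

variable (R) in
noncomputable def genPoly (N i : ℕ) : R[X] := (1 - X) ^ i * (1 + X) ^ (N - i)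

theorem coeff_genPoly {N i : ℕ} (hi : i ≤ N) (k : ℕ) :
    (genPoly R N i).coeff k =
      ∑ s ∈ range (k + 1), (-2 : R) ^ s * i.choose s * (N - s).choose (k - s) := by
  have hexpand : genPoly R N i =
      ∑ s ∈ range (i + 1), C ((-2 : R) ^ s * i.choose s) * (X ^ s * (1 + X) ^ (N - s)) := by
    rw [genPoly, show (1 - X : R[X]) = C (-2) * X + (1 + X) by rw [map_neg, map_ofNat]; ring,
      add_pow, sum_mul]
    refine sum_congr rfl fun s hs => ?_
    have hs : s ≤ i := Nat.lt_succ_iff.mp (mem_range.mp hs)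
    rw [show N - s = (i - s) + (N - i) by omega, pow_add]
    simp only [map_mul, map_pow, map_natCast]
    ring
  simp only [hexpand, finsetSum_coeff, coeff_C_mul, coeff_X_pow_mul', coeff_one_add_X_pow,
    mul_ite, mul_zero, ← sum_filter]
  refine sum_subset (fun s => by simp) fun s hs hsi => ?_
  simp only [mem_filter, mem_range] at hs hsi
  rw [Nat.choose_eq_zero_of_lt (by omega), Nat.cast_zero, mul_zero, zero_mul]

theorem coeff_map_C_mul_C (p q : R[X]) (j : ℕ) :
    (p.map C * C q).coeff j = C (p.coeff j) * q := by
  rw [coeff_mul_C, coeff_map]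

/-- In `R[X][X]` the outer variable plays `t` and `C X` plays `s`. -/
theorem sum_choose_mul_genPoly_mul_genPoly (N : ℕ) :
    ∑ i ∈ range (N + 1), C (N.choose i : R[X]) * ((genPoly R N i).map C * C (genPoly R N i))
      = C (2 ^ N) * ((1 + X) ^ N).comp (C X * X) := by
  have hsum : ((1 - X) * C (1 - X) + (1 + X) * C (1 + X) : R[X][X]) = C 2 * (1 + C X * X) := by
    simp only [map_sub, map_add, map_one, map_ofNat]; ring
  rw [pow_comp, add_comp, one_comp, X_comp, C_pow, ← mul_pow, ← hsum, add_pow]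
  refine sum_congr rfl fun i _ => ?_
  simp only [mul_pow, genPoly, Polynomial.map_mul, Polynomial.map_pow, Polynomial.map_sub,
    Polynomial.map_add, Polynomial.map_one, map_X, map_mul, map_pow, map_natCast]
  ring

variable (R) in
noncomputable def moment (N j r : ℕ) : R[X] :=
  ∑ i ∈ range (N + 1), C ((N.choose i : R) * (i : R) ^ r * (genPoly R N i).coeff j) * genPoly R N i

theorem moment_zero (N j : ℕ) : moment R N j 0 = C (2 ^ N * N.choose j : R) * X ^ j := by
  have hcoeff := congrArg (coeff · j) (sum_choose_mul_genPoly_mul_genPoly (R := R) N)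
  simp only [finsetSum_coeff, coeff_C_mul, coeff_map_C_mul_C, comp_C_mul_X_coeff,
    coeff_one_add_X_pow] at hcoeff
  simp only [moment, pow_zero, mul_one, C_mul, mul_assoc, C_pow, map_natCast, map_ofNat]
  exact hcoeff

theorem mul_derivative_pow (p : R[X]) (n : ℕ) :
    p * derivative (p ^ n) = C (n : R) * p ^ n * derivative p := by
  cases n with
  | zero => simp
  | succ n => rw [derivative_pow_succ]; push_cast; ring

noncomputable def diffOp (N : ℕ) : R[X] →ₗ[R] R[X] :=
  LinearMap.mulLeft R (C (N : R) * (1 - X)) - LinearMap.mulLeft R (1 - X ^ 2) ∘ₗ derivative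

theorem diffOp_apply (N : ℕ) (f : R[X]) :
    diffOp N f = C (N : R) * (1 - X) * f - (1 - X ^ 2) * derivative f := rfl

theorem diffOp_C_mul (N : ℕ) (a : R) (f : R[X]) : diffOp N (C a * f) = C a * diffOp N f := by
  rw [← smul_eq_C_mul, map_smul, smul_eq_C_mul]

theorem diffOp_genPoly {N i : ℕ} (hi : i ≤ N) :
    diffOp N (genPoly R N i) = C (2 * i : R) * genPoly R N i := by
  have h₁ := mul_derivative_pow (1 - X : R[X]) i
  have h₂ := mul_derivative_pow (1 + X : R[X]) (N - i)
  simp only [derivative_add, derivative_one, derivative_X, Nat.cast_sub hi, map_sub,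
    map_natCast] at h₁ h₂
  simp only [diffOp_apply, genPoly, derivative_mul, map_mul, map_ofNat, map_natCast]
  linear_combination (-(1 + X) * (1 + X) ^ (N - i)) * h₁ - (1 - X) * (1 - X) ^ i * h₂

theorem diffOp_moment (N j r : ℕ) : diffOp N (moment R N j r) = C 2 * moment R N j (r + 1) := by
  simp only [moment, map_sum, diffOp_C_mul, mul_sum]
  refine sum_congr rfl fun i hi => ?_
  rw [diffOp_genPoly (Nat.lt_succ_iff.mp (mem_range.mp hi)), ← mul_assoc, ← mul_assoc, ← C_mul,
    ← C_mul]
  congr 2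
  ring

theorem C_two_pow_mul_moment (N j r : ℕ) :
    C (2 ^ r : R) * moment R N j r = C (2 ^ N * N.choose j : R) * (diffOp N)^[r] (X ^ j) := by
  induction r with
  | zero => simp [moment_zero]
  | succ r ih =>
    rw [Function.iterate_succ_apply', ← diffOp_C_mul, ← ih, diffOp_C_mul, diffOp_moment,
      ← mul_assoc, ← C_mul, pow_succ]

theorem diffOp_X_pow (N m : ℕ) :
    diffOp N (X ^ m : R[X]) =
      C (N : R) * X ^ m - C ((N : R) - m) * X ^ (m + 1) - derivative (X ^ m) := by
  have h := mul_derivative_pow (X : R[X]) m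
  rw [derivative_X, mul_one] at h
  simp only [diffOp_apply, map_sub, map_natCast] at h ⊢
  linear_combination X * h

theorem diffOp_derivative_X_pow (N m : ℕ) :
    diffOp N (derivative (X ^ m : R[X])) = C (N : R) * derivative (X ^ m)
      - C ((N : R) * m - m * (m - 1)) * X ^ m - derivative (derivative (X ^ m)) := by
  have h := mul_derivative_pow (X : R[X]) m
  rw [derivative_X, mul_one] at h
  have h' := congrArg derivative h
  rw [derivative_mul, derivative_mul, derivative_X, derivative_C, zero_mul, zero_add,
    one_mul] at h'
  simp only [diffOp_apply, map_sub, map_mul, map_natCast, map_one] at h h' ⊢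
  linear_combination X * h' + ((m : R[X]) - 1 - N) * h

theorem coeff_diffOp_X_pow (N m k : ℕ) :
    (diffOp N (X ^ m : R[X])).coeff k = (if m = k then (N : R) else 0)
      - (if m + 1 = k then (N : R) - m else 0) - (if m = k + 1 then (k : R) + 1 else 0) := by
  simp only [diffOp_X_pow, coeff_sub, coeff_C_mul, coeff_X_pow, coeff_derivative, mul_ite,
    ite_mul, mul_one, mul_zero, one_mul, zero_mul, eq_comm (a := k), eq_comm (a := k + 1)]

theorem coeff_diffOp_derivative_X_pow (N m k : ℕ) :
    (diffOp N (derivative (X ^ m : R[X]))).coeff k =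
      (if m = k + 1 then (N : R) * (k + 1) else 0)
      - (if m = k then (N : R) * m - m * (m - 1) else 0)
      - (if m = k + 2 then ((k : R) + 2) * (k + 1) else 0) := by
  simp only [diffOp_derivative_X_pow, coeff_sub, coeff_C_mul, coeff_X_pow, coeff_derivative,
    mul_ite, ite_mul, mul_one, mul_zero, one_mul, zero_mul, eq_comm (a := k),
    eq_comm (a := k + 1), eq_comm (a := k + 1 + 1)]
  push_cast
  ring_nf

theorem coeff_diffOp_diffOp_X_pow (N m k : ℕ) :
    (diffOp N (diffOp N (X ^ m : R[X]))).coeff k = N * (diffOp N (X ^ m : R[X])).coeff k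
      - ((N : R) - m) * (diffOp N (X ^ (m + 1) : R[X])).coeff k
      - (diffOp N (derivative (X ^ m : R[X]))).coeff k := by
  conv_lhs => rw [diffOp_X_pow, map_sub (diffOp N), map_sub (diffOp N), diffOp_C_mul,
    diffOp_C_mul, coeff_sub, coeff_sub, coeff_C_mul, coeff_C_mul]

theorem ascPochhammer_eval_neg_natCast (n s : ℕ) :
    (ascPochhammer ℝ s).eval (-(n : ℝ)) = (-1) ^ s * (s.factorial * n.choose s) := by
  rw [ascPochhammer_eval_neg_eq_descPochhammer, descPochhammer_eval_eq_descFactorial,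
    Nat.descFactorial_eq_factorial_mul_choose, Nat.cast_mul]

theorem choose_mul_kraw {N k : ℕ} (hk : k ≤ N) (i : ℕ) :
    (N.choose k : ℝ) * kraw N k i =
      ∑ s ∈ range (k + 1), (-2 : ℝ) ^ s * i.choose s * (N - s).choose (k - s) := by
  rw [kraw, mul_sum]
  refine sum_congr rfl fun s hs => ?_
  have hs : s ≤ k := Nat.lt_succ_iff.mp (mem_range.mp hs)
  have hNs : (N.choose s : ℝ) ≠ 0 := by exact_mod_cast (Nat.choose_pos (hs.trans hk)).ne'
  have hchoose : (N.choose k * k.choose s : ℝ) = N.choose s * (N - s).choose (k - s) := by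
    exact_mod_cast Nat.choose_mul hs
  simp only [ascPochhammer_eval_neg_natCast, neg_pow (2 : ℝ)]
  field_simp
  linear_combination (i.choose s : ℝ) * hchoose

theorem coeff_genPoly_eq_choose_mul_kraw {N i k : ℕ} (hi : i ≤ N) (hk : k ≤ N) :
    (genPoly ℝ N i).coeff k = N.choose k * kraw N k i := by
  rw [coeff_genPoly hi, choose_mul_kraw hk]

theorem coeff_moment {N j k : ℕ} (hj : j ≤ N) (hk : k ≤ N) (r : ℕ) :
    (moment ℝ N j r).coeff k = N.choose k * N.choose j *
      ∑ i ∈ range (N + 1), (N.choose i : ℝ) * (i : ℝ) ^ r * kraw N k i * kraw N j i := by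
  simp only [moment, finsetSum_coeff, coeff_C_mul, mul_sum]
  refine sum_congr rfl fun i hi => ?_
  have hi : i ≤ N := Nat.lt_succ_iff.mp (mem_range.mp hi)
  rw [coeff_genPoly_eq_choose_mul_kraw hi hj, coeff_genPoly_eq_choose_mul_kraw hi hk]
  ring

theorem sum_choose_mul_pow_mul_kraw_mul_kraw {N k j : ℕ} (hk : k ≤ N) (hj : j ≤ N) (r : ℕ)
    {T : ℝ} (hT : ((diffOp N)^[r] (X ^ j : ℝ[X])).coeff k = 2 ^ r * T) :
    ∑ i ∈ range (N + 1), (N.choose i : ℝ) * (i : ℝ) ^ r * kraw N k i * kraw N j i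
      = 2 ^ N * ((N.choose k : ℝ))⁻¹ * T := by
  have hmoment := congrArg (coeff · k) (C_two_pow_mul_moment (R := ℝ) N j r)
  simp only [coeff_C_mul, coeff_moment hj hk, hT] at hmoment
  have hck : (N.choose k : ℝ) ≠ 0 := by exact_mod_cast (Nat.choose_pos hk).ne'
  have hcj : (N.choose j : ℝ) ≠ 0 := by exact_mod_cast (Nat.choose_pos hj).ne'
  have hcancel : (N.choose k : ℝ) * ∑ i ∈ range (N + 1),
      (N.choose i : ℝ) * (i : ℝ) ^ r * kraw N k i * kraw N j i = 2 ^ N * T := by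
    apply mul_left_cancel₀ (mul_ne_zero (pow_ne_zero r two_ne_zero) hcj)
    linear_combination hmoment
  rw [mul_right_comm, ← hcancel]
  field_simp

end Krawtchouk

open Krawtchouk

/-- the weighted sums `Σ_i C(N,i) iᵖ K_k(i) K_j(i)` for `p = 1, 2`. -/
theorem stmt15 (N : ℕ) (ℓ : ℝ) (hℓ : ℓ = (N : ℝ) / 2) :
    ∀ k j : ℕ, k ≤ N → j ≤ N →
      ((∑ i ∈ Finset.range (N + 1),
          (N.choose i : ℝ) * (i : ℝ) * kraw N k (i : ℝ) * kraw N j (i : ℝ))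
        = (2 : ℝ) ^ N * ((N.choose k : ℝ))⁻¹ *
            (if j = k + 1 then -((k : ℝ) + 1) / 2
             else if j = k then ℓ
             else if j + 1 = k then -((N : ℝ) - (k : ℝ) + 1) / 2
             else 0))
      ∧ ((∑ i ∈ Finset.range (N + 1),
          (N.choose i : ℝ) * (i : ℝ) ^ 2 * kraw N k (i : ℝ) * kraw N j (i : ℝ))
        = (2 : ℝ) ^ N * ((N.choose k : ℝ))⁻¹ *
            (if j = k + 2 then ((k : ℝ) + 1) * ((k : ℝ) + 2) / 4
             else if j = k + 1 then -ℓ * ((k : ℝ) + 1)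
             else if j = k then ℓ * (ℓ + 1/2) + (k : ℝ) * (ℓ - (k : ℝ)/2)
             else if j + 1 = k then -ℓ * ((N : ℝ) - (k : ℝ) + 1)
             else if j + 2 = k then ((N : ℝ) - (k : ℝ) + 1) * ((N : ℝ) - (k : ℝ) + 2) / 4
             else 0)) := by
  subst hℓ
  intro k j hk hj
  constructor
  · refine Eq.trans (by simp only [pow_one]) (sum_choose_mul_pow_mul_kraw_mul_kraw hk hj 1 ?_)
    rw [Function.iterate_one, coeff_diffOp_X_pow]
    split_ifs <;> first | omega | (subst_vars; push_cast; ring)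
  · refine sum_choose_mul_pow_mul_kraw_mul_kraw hk hj 2 ?_
    rw [Function.iterate_succ_apply', Function.iterate_one, coeff_diffOp_diffOp_X_pow,
      coeff_diffOp_X_pow, coeff_diffOp_X_pow, coeff_diffOp_derivative_X_pow]
    split_ifs <;> first | omega | (subst_vars; push_cast; ring)
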